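/- The modified operators grad~ = grad − g∘div∘(𝒩+𝒞−1)^{-1} and div~ = div − (𝒩+𝒞−1)^{-1}∘grad∘tr commute with the depth operator κ = (𝒩−𝒞−1)/2; equivalently, 𝒩∘div~ = div~∘(𝒩−1), 𝒩∘grad~ = grad~∘(𝒩+1), 𝒞∘div~ = div~∘(𝒞−1), and 𝒞∘grad~ = grad~∘(𝒞+1), as operators on polynomial symmetric tensor fields on flat ℝⁿ. -/

import Mathlib

open MvPolynomial Finset

/-- Polynomial symmetric tensor fields on flat `ℝⁿ`: polynomials in `x` (Sum.inl)
and auxiliary `y` (Sum.inr) variables. -/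
abbrev STF (n : ℕ) := MvPolynomial (Fin n ⊕ Fin n) ℝ

/-- `grad = Σ_μ y_μ ∂/∂x^μ`. -/
noncomputable def oGrad (n : ℕ) : Module.End ℝ (STF n) :=
  ∑ μ : Fin n, (LinearMap.mulLeft ℝ (X (Sum.inr μ))) ∘ₗ (pderiv (Sum.inl μ)).toLinearMap

/-- `div = Σ_μ (∂/∂y_μ)(∂/∂x^μ)`. -/
noncomputable def oDiv (n : ℕ) : Module.End ℝ (STF n) :=
  ∑ μ : Fin n, (pderiv (Sum.inr μ)).toLinearMap ∘ₗ (pderiv (Sum.inl μ)).toLinearMap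

/-- `□ = Σ_μ ∂²/∂(x^μ)²`. -/
noncomputable def oBox (n : ℕ) : Module.End ℝ (STF n) :=
  ∑ μ : Fin n, (pderiv (Sum.inl μ)).toLinearMap ∘ₗ (pderiv (Sum.inl μ)).toLinearMap

/-- Fiberwise Euler operator `N = Σ_μ y_μ ∂/∂y_μ`. -/
noncomputable def oNy (n : ℕ) : Module.End ℝ (STF n) :=
  ∑ μ : Fin n, (LinearMap.mulLeft ℝ (X (Sum.inr μ))) ∘ₗ (pderiv (Sum.inr μ)).toLinearMap

/-- Fiberwise multiplication `g = (Σ_μ y_μ²)·`. -/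
noncomputable def oGy (n : ℕ) : Module.End ℝ (STF n) :=
  LinearMap.mulLeft ℝ (∑ μ : Fin n, X (Sum.inr μ) ^ 2)

/-- Fiberwise trace `tr = Σ_μ ∂²/∂y_μ²`. -/
noncomputable def oTry (n : ℕ) : Module.End ℝ (STF n) :=
  ∑ μ : Fin n, (pderiv (Sum.inr μ)).toLinearMap ∘ₗ (pderiv (Sum.inr μ)).toLinearMap

/-! The proof works on the isotypic pieces `gᵏφ` with `φ` homogeneous of degree `s` in `y` and
traceless. By the Fischer decomposition these span all polynomials, and on them `𝒩`, `𝒞` and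
`(𝒩 + 𝒞 - 1)⁻¹` act by the scalars `s + 2k + n/2`, `s + (n-2)/2` and `(2s + 2k + n - 2)⁻¹`.
Splitting `grad φ = φ' + g ψ` into harmonic parts of degrees `s + 1` and `s - 1`, a direct
computation shows that `grad~` maps `gᵏφ` to a multiple of `gᵏφ'` and `div~` maps it to a multiple
of `gᵏψ`: the correction terms cancel exactly the components that would change the depth `k`.
Hence both operators shift `s` by `±1` at fixed `k`, which gives all four identities. -/

theorem MvPolynomial.pderiv_pderiv_comm {σ R : Type*} [CommSemiring R] (i j : σ)
    (p : MvPolynomial σ R) : pderiv i (pderiv j p) = pderiv j (pderiv i p) := by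
  classical
  induction p using MvPolynomial.induction_on with
  | C a => simp
  | add p q hp hq => simp [hp, hq]
  | mul_X p k hp =>
    simp only [pderiv_mul, map_add, pderiv_X, hp]
    rcases eq_or_ne k j with rfl | hkj <;> rcases eq_or_ne k i with rfl | hki <;> simp [*]

namespace Module.End

variable {R M : Type*} [Semiring R] [AddCommMonoid M] [Module R M]

theorem pow_succ_apply (f : Module.End R M) (k : ℕ) (m : M) : (f ^ (k + 1)) m = (f ^ k) (f m) := by
  rw [pow_succ, mul_apply]

theorem pow_succ_apply' (f : Module.End R M) (k : ℕ) (m : M) : (f ^ (k + 1)) m = f ((f ^ k) m) := by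
  rw [pow_succ', mul_apply]

end Module.End

open Module.End (pow_succ_apply pow_succ_apply')

section Commutators

variable {n : ℕ}

lemma oGrad_apply (p : STF n) :
    oGrad n p = ∑ μ : Fin n, X (Sum.inr μ) * pderiv (Sum.inl μ) p := by simp [oGrad]

lemma oNy_apply (p : STF n) :
    oNy n p = ∑ μ : Fin n, X (Sum.inr μ) * pderiv (Sum.inr μ) p := by simp [oNy]

lemma oDiv_apply (p : STF n) :
    oDiv n p = ∑ μ : Fin n, pderiv (Sum.inr μ) (pderiv (Sum.inl μ) p) := by simp [oDiv]

lemma oTry_apply (p : STF n) :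
    oTry n p = ∑ μ : Fin n, pderiv (Sum.inr μ) (pderiv (Sum.inr μ) p) := by simp [oTry]

lemma oGy_apply (p : STF n) :
    oGy n p = ∑ μ : Fin n, X (Sum.inr μ) ^ 2 * p := by simp [oGy, Finset.sum_mul]

lemma mul_oGy (a q : STF n) : a * oGy n q = oGy n (a * q) := by
  simp only [oGy, LinearMap.mulLeft_apply]; ring

lemma real_smul_eq_mul (c : ℝ) (p : STF n) : c • p = MvPolynomial.C c * p := smul_eq_C_mul p c

lemma two_smul_eq_mul (p : STF n) : (2 : ℝ) • p = 2 * p := by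
  simp [smul_eq_C_mul, map_ofNat]

lemma pderiv_inr_X_inr_mul (μ ν : Fin n) (p : STF n) :
    pderiv (Sum.inr μ) (X (Sum.inr ν) * p)
      = (if μ = ν then p else 0) + X (Sum.inr ν) * pderiv (Sum.inr μ) p := by
  rcases eq_or_ne μ ν with rfl | h
  · simp; ring
  · simp [h, pderiv_X_of_ne (Sum.inr_injective.ne h.symm)]

lemma pderiv_inl_X_inr_mul (μ ν : Fin n) (p : STF n) :
    pderiv (Sum.inl μ) (X (Sum.inr ν) * p) = X (Sum.inr ν) * pderiv (Sum.inl μ) p := by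
  simp [pderiv_X_of_ne Sum.inr_ne_inl]

lemma pderiv_inr_X_inr_sq_mul (μ ν : Fin n) (p : STF n) :
    pderiv (Sum.inr μ) (X (Sum.inr ν) ^ 2 * p)
      = (if μ = ν then 2 * (X (Sum.inr ν) * p) else 0)
        + X (Sum.inr ν) ^ 2 * pderiv (Sum.inr μ) p := by
  rcases eq_or_ne μ ν with rfl | h
  · simp; ring
  · simp [h, pderiv_X_of_ne (Sum.inr_injective.ne h.symm)]

lemma pderiv_inl_X_inr_sq_mul (μ ν : Fin n) (p : STF n) :
    pderiv (Sum.inl μ) (X (Sum.inr ν) ^ 2 * p) = X (Sum.inr ν) ^ 2 * pderiv (Sum.inl μ) p := by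
  simp [pderiv_X_of_ne Sum.inr_ne_inl]

lemma pderiv_inr_oNy (μ : Fin n) (p : STF n) :
    pderiv (Sum.inr μ) (oNy n p) = pderiv (Sum.inr μ) p + oNy n (pderiv (Sum.inr μ) p) := by
  simp only [oNy_apply, map_sum, pderiv_inr_X_inr_mul, Finset.sum_add_distrib,
    Finset.sum_ite_eq, Finset.mem_univ, if_true, pderiv_pderiv_comm (Sum.inr μ)]

lemma pderiv_inr_oGy (μ : Fin n) (p : STF n) :
    pderiv (Sum.inr μ) (oGy n p) = 2 * (X (Sum.inr μ) * p) + oGy n (pderiv (Sum.inr μ) p) := by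
  simp only [oGy_apply, map_sum, pderiv_inr_X_inr_sq_mul, Finset.sum_add_distrib,
    Finset.sum_ite_eq, Finset.mem_univ, if_true]

lemma pderiv_inl_oGy (μ : Fin n) (p : STF n) :
    pderiv (Sum.inl μ) (oGy n p) = oGy n (pderiv (Sum.inl μ) p) := by
  simp only [oGy_apply, map_sum, pderiv_inl_X_inr_sq_mul]

lemma pderiv_inr_oGrad (μ : Fin n) (p : STF n) :
    pderiv (Sum.inr μ) (oGrad n p) = pderiv (Sum.inl μ) p + oGrad n (pderiv (Sum.inr μ) p) := by
  simp only [oGrad_apply, map_sum, pderiv_inr_X_inr_mul, Finset.sum_add_distrib,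
    Finset.sum_ite_eq, Finset.mem_univ, if_true, pderiv_pderiv_comm (Sum.inr μ)]

lemma oNy_oGrad (p : STF n) : oNy n (oGrad n p) = oGrad n (oNy n p) + oGrad n p := by
  simp only [oNy_apply, oGrad_apply, map_sum, pderiv_inr_X_inr_mul, pderiv_inl_X_inr_mul,
    mul_add, Finset.sum_add_distrib, mul_ite, mul_zero, Finset.sum_ite_eq', Finset.mem_univ,
    if_true]
  rw [add_comm, add_left_inj, Finset.sum_comm]
  exact Finset.sum_congr rfl fun μ _ => Finset.sum_congr rfl fun ν _ => by
    rw [pderiv_pderiv_comm]; ring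

lemma oDiv_oNy (p : STF n) : oDiv n (oNy n p) = oNy n (oDiv n p) + oDiv n p := by
  simp only [oNy_apply, oDiv_apply, map_sum, pderiv_inr_X_inr_mul, pderiv_inl_X_inr_mul,
    Finset.sum_add_distrib, Finset.sum_ite_eq', Finset.mem_univ, if_true]
  rw [add_comm]
  refine congrArg₂ (· + ·) ?_ ?_
  · rw [Finset.sum_comm]
    refine Finset.sum_congr rfl fun a _ => Finset.sum_congr rfl fun b _ => ?_
    rw [pderiv_pderiv_comm (Sum.inl a) (Sum.inr b) p, pderiv_pderiv_comm (Sum.inr a) (Sum.inr b)]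
  · exact Finset.sum_congr rfl fun a _ => by rw [pderiv_pderiv_comm]

lemma oNy_oGy (p : STF n) : oNy n (oGy n p) = oGy n (oNy n p) + (2 : ℝ) • oGy n p := by
  have key (μ : Fin n) : X (Sum.inr μ) * pderiv (Sum.inr μ) (oGy n p)
      = 2 * (X (Sum.inr μ) ^ 2 * p) + oGy n (X (Sum.inr μ) * pderiv (Sum.inr μ) p) := by
    rw [pderiv_inr_oGy, mul_add, mul_oGy]; ring
  rw [oNy_apply (oGy n p), Finset.sum_congr rfl fun μ _ => key μ, Finset.sum_add_distrib,
    add_comm, ← map_sum, ← oNy_apply, two_smul_eq_mul, oGy_apply p, Finset.mul_sum]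

lemma oTry_oNy (p : STF n) : oTry n (oNy n p) = oNy n (oTry n p) + (2 : ℝ) • oTry n p := by
  have key (μ : Fin n) : pderiv (Sum.inr μ) (pderiv (Sum.inr μ) (oNy n p))
      = 2 * pderiv (Sum.inr μ) (pderiv (Sum.inr μ) p)
        + oNy n (pderiv (Sum.inr μ) (pderiv (Sum.inr μ) p)) := by
    rw [pderiv_inr_oNy, map_add, pderiv_inr_oNy]; ring
  rw [oTry_apply (oNy n p), Finset.sum_congr rfl fun μ _ => key μ, Finset.sum_add_distrib,
    add_comm, ← map_sum, ← oTry_apply, two_smul_eq_mul, oTry_apply, Finset.mul_sum]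

lemma oTry_oGy (p : STF n) :
    oTry n (oGy n p) = oGy n (oTry n p) + (2 * n : ℝ) • p + (4 : ℝ) • oNy n p := by
  have key (μ : Fin n) : pderiv (Sum.inr μ) (pderiv (Sum.inr μ) (oGy n p))
      = oGy n (pderiv (Sum.inr μ) (pderiv (Sum.inr μ) p)) + 2 * p
        + 4 * (X (Sum.inr μ) * pderiv (Sum.inr μ) p) := by
    have h2 : pderiv (Sum.inr μ) (2 : STF n) = 0 := by
      rw [← map_ofNat MvPolynomial.C 2]; exact pderiv_C
    rw [pderiv_inr_oGy, map_add, pderiv_inr_oGy, pderiv_mul, pderiv_mul, h2, pderiv_X_self]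
    ring
  rw [oTry_apply (oGy n p), Finset.sum_congr rfl fun μ _ => key μ, Finset.sum_add_distrib,
    Finset.sum_add_distrib, ← map_sum, ← oTry_apply, Finset.sum_const, Finset.card_univ,
    Fintype.card_fin, nsmul_eq_mul, ← Finset.mul_sum, ← oNy_apply, real_smul_eq_mul,
    real_smul_eq_mul]
  simp only [map_mul, map_natCast, map_ofNat]
  ring

lemma oDiv_oGy (p : STF n) : oDiv n (oGy n p) = oGy n (oDiv n p) + (2 : ℝ) • oGrad n p := by
  have key (μ : Fin n) : pderiv (Sum.inr μ) (pderiv (Sum.inl μ) (oGy n p))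
      = oGy n (pderiv (Sum.inr μ) (pderiv (Sum.inl μ) p))
        + 2 * (X (Sum.inr μ) * pderiv (Sum.inl μ) p) := by
    rw [pderiv_inl_oGy, pderiv_inr_oGy]; ring
  rw [oDiv_apply (oGy n p), Finset.sum_congr rfl fun μ _ => key μ, Finset.sum_add_distrib,
    ← map_sum, ← oDiv_apply, two_smul_eq_mul, oGrad_apply, Finset.mul_sum]

lemma oTry_oGrad (p : STF n) : oTry n (oGrad n p) = oGrad n (oTry n p) + (2 : ℝ) • oDiv n p := by
  have key (μ : Fin n) : pderiv (Sum.inr μ) (pderiv (Sum.inr μ) (oGrad n p))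
      = oGrad n (pderiv (Sum.inr μ) (pderiv (Sum.inr μ) p))
        + 2 * pderiv (Sum.inr μ) (pderiv (Sum.inl μ) p) := by
    rw [pderiv_inr_oGrad, map_add, pderiv_inr_oGrad, pderiv_pderiv_comm (Sum.inr μ) (Sum.inl μ)]
    ring
  rw [oTry_apply (oGrad n p), Finset.sum_congr rfl fun μ _ => key μ, Finset.sum_add_distrib,
    ← map_sum, ← oTry_apply, two_smul_eq_mul, oDiv_apply, Finset.mul_sum]

lemma oGrad_oGy (p : STF n) : oGrad n (oGy n p) = oGy n (oGrad n p) := by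
  simp only [oGrad_apply, oGy_apply, map_sum, pderiv_inl_X_inr_sq_mul]
  rw [Finset.sum_comm]
  exact Finset.sum_congr rfl fun a _ => Finset.sum_congr rfl fun b _ => by ring

lemma oTry_oDiv (p : STF n) : oTry n (oDiv n p) = oDiv n (oTry n p) := by
  simp only [oTry_apply, oDiv_apply, map_sum]
  rw [Finset.sum_comm]
  refine Finset.sum_congr rfl fun a _ => Finset.sum_congr rfl fun b _ => ?_
  rw [pderiv_pderiv_comm (Sum.inr a) (Sum.inr b) (pderiv (Sum.inl b) p),
    pderiv_pderiv_comm (Sum.inr a) (Sum.inl b) p,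
    pderiv_pderiv_comm (Sum.inl b) (Sum.inr a) (pderiv (Sum.inr a) p),
    pderiv_pderiv_comm (Sum.inr b) (Sum.inr a) (pderiv (Sum.inl b) (pderiv (Sum.inr a) p))]

end Commutators

section EulerOperator

variable {n : ℕ}

def IsHarmonicOfDegree (n : ℕ) (s : ℝ) (φ : STF n) : Prop := oNy n φ = s • φ ∧ oTry n φ = 0

lemma isHarmonicOfDegree_zero (s : ℝ) : IsHarmonicOfDegree n s 0 := by
  simp [IsHarmonicOfDegree]

def yDegree (m : (Fin n ⊕ Fin n) →₀ ℕ) : ℕ := ∑ μ : Fin n, m (Sum.inr μ)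

lemma oNy_monomial (m : (Fin n ⊕ Fin n) →₀ ℕ) (r : ℝ) :
    oNy n (monomial m r) = (yDegree m : ℝ) • monomial m r := by
  rw [oNy_apply, Finset.sum_congr rfl fun μ _ => X_mul_pderiv_monomial, ← Finset.sum_smul,
    Nat.cast_smul_eq_nsmul, yDegree]

lemma coeff_oNy (m : (Fin n ⊕ Fin n) →₀ ℕ) (p : STF n) :
    coeff m (oNy n p) = yDegree m * coeff m p := by
  induction p using MvPolynomial.induction_on' with
  | monomial m' r =>
    rw [oNy_monomial, coeff_smul, coeff_monomial, smul_eq_mul]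
    split_ifs with h <;> simp [h]
  | add p q hp hq => rw [map_add, coeff_add, coeff_add, hp, hq, mul_add]

lemma exists_eq_natCast_of_oNy_eq_smul {s : ℝ} {φ : STF n} (h : oNy n φ = s • φ) (hφ : φ ≠ 0) :
    ∃ d : ℕ, s = d := by
  obtain ⟨m, hm⟩ := exists_coeff_ne_zero hφ
  refine ⟨yDegree m, mul_right_cancel₀ hm ?_⟩
  rw [← smul_eq_mul, ← coeff_smul, ← h, coeff_oNy]

lemma eq_zero_of_oNy_eq_smul_of_neg {s : ℝ} {φ : STF n} (h : oNy n φ = s • φ) (hs : s < 0) :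
    φ = 0 := by
  by_contra hφ
  obtain ⟨d, rfl⟩ := exists_eq_natCast_of_oNy_eq_smul h hφ
  exact (Nat.cast_nonneg d).not_gt hs

end EulerOperator

section PowersOfOGy

variable {n : ℕ}

lemma oNy_pow_oGy {s : ℝ} {φ : STF n} (hφ : oNy n φ = s • φ) (k : ℕ) :
    oNy n ((oGy n ^ k) φ) = (s + 2 * k) • (oGy n ^ k) φ := by
  induction k with
  | zero => simpa using hφ
  | succ k ih =>
    rw [pow_succ_apply', oNy_oGy, ih, map_smul]
    push_cast
    module

lemma oGrad_pow_oGy (φ : STF n) (k : ℕ) :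
    oGrad n ((oGy n ^ k) φ) = (oGy n ^ k) (oGrad n φ) := by
  induction k with
  | zero => simp
  | succ k ih => rw [pow_succ_apply', oGrad_oGy, ih, pow_succ_apply']

lemma oDiv_pow_succ_oGy (φ : STF n) (k : ℕ) :
    oDiv n ((oGy n ^ (k + 1)) φ)
      = (oGy n ^ (k + 1)) (oDiv n φ) + (2 * (k + 1) : ℝ) • (oGy n ^ k) (oGrad n φ) := by
  induction k with
  | zero => simp [oDiv_oGy]
  | succ k ih =>
    rw [pow_succ_apply' _ (k + 1), oDiv_oGy, ih, map_add, map_smul, oGrad_pow_oGy,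
      ← pow_succ_apply', ← pow_succ_apply']
    push_cast
    module

lemma oGy_oDiv_pow_oGy (φ : STF n) (k : ℕ) :
    oGy n (oDiv n ((oGy n ^ k) φ))
      = (oGy n ^ (k + 1)) (oDiv n φ) + (2 * k : ℝ) • (oGy n ^ k) (oGrad n φ) := by
  cases k with
  | zero => simp
  | succ k =>
    rw [oDiv_pow_succ_oGy, map_add, map_smul, ← pow_succ_apply', ← pow_succ_apply']
    push_cast
    rfl

lemma oTry_pow_succ_oGy {s : ℝ} {φ : STF n} (hφ : IsHarmonicOfDegree n s φ) (k : ℕ) :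
    oTry n ((oGy n ^ (k + 1)) φ) = (2 * (k + 1) * (2 * s + 2 * k + n) : ℝ) • (oGy n ^ k) φ := by
  induction k with
  | zero =>
    simp only [zero_add, pow_one, pow_zero, Module.End.one_apply, oTry_oGy, hφ.2, hφ.1, map_zero]
    push_cast
    module
  | succ k ih =>
    rw [pow_succ_apply' _ (k + 1), oTry_oGy, ih, map_smul, oNy_pow_oGy hφ.1, ← pow_succ_apply']
    push_cast
    module

end PowersOfOGy

section FischerDecomposition

variable {n : ℕ}

def isotypicGenerators (n d : ℕ) : Set (STF n) :=
  {v | ∃ (s k : ℕ) (φ : STF n), s + 2 * k = d ∧ IsHarmonicOfDegree n s φ ∧ v = (oGy n ^ k) φ}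

lemma span_isotypicGenerators_le_eigenspace (d : ℕ) :
    Submodule.span ℝ (isotypicGenerators n d) ≤ (oNy n).eigenspace (d : ℝ) := by
  rw [Submodule.span_le]
  rintro _ ⟨s, k, φ, rfl, hφ, rfl⟩
  rw [SetLike.mem_coe, Module.End.mem_eigenspace_iff, oNy_pow_oGy hφ.1]
  push_cast
  rfl

lemma map_oGy_span_isotypicGenerators_le (d : ℕ) :
    (Submodule.span ℝ (isotypicGenerators n d)).map (oGy n)
      ≤ Submodule.span ℝ (isotypicGenerators n (d + 2)) := by
  rw [Submodule.map_span_le]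
  rintro _ ⟨s, k, φ, rfl, hφ, rfl⟩
  exact Submodule.subset_span ⟨s, k + 1, φ, by ring, hφ, (pow_succ_apply' _ k φ).symm⟩

lemma span_isotypicGenerators_le_map_oTry_mul_oGy (hn : 1 ≤ n) (d : ℕ) :
    Submodule.span ℝ (isotypicGenerators n d)
      ≤ (Submodule.span ℝ (isotypicGenerators n d)).map (oTry n * oGy n) := by
  rw [Submodule.span_le]
  rintro _ ⟨s, k, φ, hd, hφ, rfl⟩
  have hc : (0 : ℝ) < 2 * (k + 1) * (2 * s + 2 * k + n) := by
    have : (1 : ℝ) ≤ n := by exact_mod_cast hn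
    positivity
  refine ⟨(2 * (k + 1) * (2 * s + 2 * k + n) : ℝ)⁻¹ • (oGy n ^ k) φ,
    Submodule.smul_mem _ _ (Submodule.subset_span ⟨s, k, φ, hd, hφ, rfl⟩), ?_⟩
  rw [Module.End.mul_apply, map_smul, map_smul, ← pow_succ_apply', oTry_pow_succ_oGy hφ,
    smul_smul, inv_mul_cancel₀ hc.ne', one_smul]

lemma mem_span_isotypicGenerators (hn : 1 ≤ n) (d : ℕ) {p : STF n} (hp : oNy n p = (d : ℝ) • p) :
    p ∈ Submodule.span ℝ (isotypicGenerators n d) := by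
  induction d using Nat.strong_induction_on generalizing p with
  | _ d ih =>
  have htr : oNy n (oTry n p) = ((d : ℝ) - 2) • oTry n p := by
    rw [sub_smul, eq_sub_iff_add_eq, ← oTry_oNy, hp, map_smul]
  obtain hd | ⟨e, rfl⟩ : d < 2 ∨ ∃ e, d = e + 2 := by
    rcases Nat.lt_or_ge d 2 with h | h
    · exact .inl h
    · exact .inr ⟨d - 2, by omega⟩
  · have htr0 : oTry n p = 0 :=
      eq_zero_of_oNy_eq_smul_of_neg htr (sub_neg.2 (by exact_mod_cast hd))
    exact Submodule.subset_span ⟨d, 0, p, by ring, ⟨hp, htr0⟩, rfl⟩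
  · -- By induction `tr p` lies in the span of the degree-`e` pieces, on which `tr ∘ g` is
    -- invertible; removing `g r` with `tr (g r) = tr p` leaves a harmonic remainder.
    have htr' : oNy n (oTry n p) = (e : ℝ) • oTry n p := by rw [htr]; push_cast; ring_nf
    obtain ⟨r, hr, hrp⟩ :=
      span_isotypicGenerators_le_map_oTry_mul_oGy hn e (ih e (by omega) htr')
    have hre : oNy n r = (e : ℝ) • r := Module.End.mem_eigenspace_iff.1
      (span_isotypicGenerators_le_eigenspace e hr)
    have hharm : IsHarmonicOfDegree n ((e + 2 : ℕ) : ℝ) (p - oGy n r) := by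
      refine ⟨?_, by rw [map_sub, ← Module.End.mul_apply, hrp, sub_self]⟩
      rw [map_sub, hp, oNy_oGy, hre, map_smul, smul_sub]
      push_cast
      module
    have hgen : p - oGy n r ∈ Submodule.span ℝ (isotypicGenerators n (e + 2)) :=
      Submodule.subset_span ⟨e + 2, 0, _, by ring, hharm, rfl⟩
    simpa using Submodule.add_mem _ hgen
      (map_oGy_span_isotypicGenerators_le e ⟨r, hr, rfl⟩)

lemma span_iUnion_isotypicGenerators (hn : 1 ≤ n) :
    Submodule.span ℝ (⋃ d, isotypicGenerators n d) = ⊤ := by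
  refine Submodule.eq_top_iff'.2 fun p => ?_
  induction p using MvPolynomial.induction_on' with
  | monomial m r =>
    exact Submodule.span_mono (Set.subset_iUnion _ (yDegree m))
      (mem_span_isotypicGenerators hn _ (oNy_monomial m r))
  | add p q hp hq => exact Submodule.add_mem _ hp hq

lemma ext_of_pow_oGy_apply (hn : 1 ≤ n) {f g : Module.End ℝ (STF n)}
    (h : ∀ (s k : ℕ) (φ : STF n), IsHarmonicOfDegree n s φ →
      f ((oGy n ^ k) φ) = g ((oGy n ^ k) φ)) : f = g :=
  LinearMap.ext_on (span_iUnion_isotypicGenerators hn) <| by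
    rintro _ ⟨_, ⟨d, rfl⟩, s, k, φ, -, hφ, rfl⟩
    exact h s k φ hφ

end FischerDecomposition

namespace Module.End

theorem eq_zero_of_mul_eq_one_of_apply_eq_zero {R M : Type*} [Semiring R] [AddCommMonoid M]
    [Module R M] {E A : Module.End R M} (h : E * A = 1) {v : M} (hv : A v = 0) : v = 0 := by
  rw [← one_apply (R := R) v, ← h, mul_apply, hv, map_zero]

theorem apply_eq_inv_smul_of_mul_eq_one {K V : Type*} [Field K] [AddCommGroup V] [Module K V]
    {E A : Module.End K V} (h : E * A = 1) {v : V} {a : K} (hv : A v = a • v) :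
    E v = a⁻¹ • v := by
  have hv' : v = a • E v := by rw [← map_smul, ← hv, ← mul_apply, h, one_apply]
  rcases eq_or_ne a 0 with rfl | ha
  · rw [zero_smul] at hv'
    rw [hv', map_zero, smul_zero]
  · conv_rhs => rw [hv']
    rw [smul_smul, inv_mul_cancel₀ ha, one_smul]

end Module.End

section IsotypicPieces

variable {n : ℕ}

def ActsOnIsotypicBy (T : Module.End ℝ (STF n)) (c : ℝ → ℕ → ℝ) : Prop :=
  ∀ (s : ℝ) (k : ℕ) (φ : STF n), IsHarmonicOfDegree n s φ →
    T ((oGy n ^ k) φ) = c s k • (oGy n ^ k) φ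

def ShiftsHarmonicDegree (T : Module.End ℝ (STF n)) (δ : ℝ) : Prop :=
  ∀ (s : ℝ) (k : ℕ) (φ : STF n), IsHarmonicOfDegree n s φ →
    ∃ (c : ℝ) (φ' : STF n), IsHarmonicOfDegree n (s + δ) φ' ∧
      T ((oGy n ^ k) φ) = c • (oGy n ^ k) φ'

namespace ActsOnIsotypicBy

variable {S T : Module.End ℝ (STF n)} {c d : ℝ → ℕ → ℝ}

lemma one : ActsOnIsotypicBy (1 : Module.End ℝ (STF n)) (fun _ _ => 1) := by
  intro s k φ _
  rw [one_smul, Module.End.one_apply]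

lemma add (hS : ActsOnIsotypicBy S c) (hT : ActsOnIsotypicBy T d) :
    ActsOnIsotypicBy (S + T) (fun s k => c s k + d s k) := by
  intro s k φ hφ
  rw [LinearMap.add_apply, hS s k φ hφ, hT s k φ hφ, add_smul]

lemma sub (hS : ActsOnIsotypicBy S c) (hT : ActsOnIsotypicBy T d) :
    ActsOnIsotypicBy (S - T) (fun s k => c s k - d s k) := by
  intro s k φ hφ
  rw [LinearMap.sub_apply, hS s k φ hφ, hT s k φ hφ, sub_smul]

lemma smul (a : ℝ) (hT : ActsOnIsotypicBy T c) :
    ActsOnIsotypicBy (a • T) (fun s k => a * c s k) := by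
  intro s k φ hφ
  rw [LinearMap.smul_apply, hT s k φ hφ, smul_smul]

lemma congr (hT : ActsOnIsotypicBy T c) (h : ∀ s k, c s k = d s k) : ActsOnIsotypicBy T d := by
  intro s k φ hφ
  rw [hT s k φ hφ, h]

lemma of_natCast
    (hT : ∀ (s k : ℕ) (φ : STF n), oNy n φ = (s : ℝ) • φ → oTry n φ = 0 →
      T ((oGy n ^ k) φ) = c s k • (oGy n ^ k) φ) :
    ActsOnIsotypicBy T c := by
  rintro s k φ ⟨hφ, htr⟩
  rcases eq_or_ne φ 0 with rfl | hφ0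
  · simp
  obtain ⟨d, rfl⟩ := exists_eq_natCast_of_oNy_eq_smul hφ hφ0
  exact hT d k φ hφ htr

variable {E A : Module.End ℝ (STF n)}

lemma inv (hA : ActsOnIsotypicBy A c) (hEA : E * A = 1) :
    ActsOnIsotypicBy E (fun s k => (c s k)⁻¹) := fun s k φ hφ =>
  Module.End.apply_eq_inv_smul_of_mul_eq_one hEA (hA s k φ hφ)

lemma ne_zero (hA : ActsOnIsotypicBy A c) (hEA : E * A = 1) {s : ℝ} {k : ℕ} {φ : STF n}
    (hφ : IsHarmonicOfDegree n s φ) (hv : (oGy n ^ k) φ ≠ 0) : c s k ≠ 0 := fun h0 =>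
  hv (Module.End.eq_zero_of_mul_eq_one_of_apply_eq_zero hEA (by rw [hA s k φ hφ, h0, zero_smul]))

end ActsOnIsotypicBy

lemma actsOnIsotypicBy_oNy : ActsOnIsotypicBy (oNy n) (fun s k => s + 2 * k) :=
  fun _ k _ hφ => oNy_pow_oGy hφ.1 k

lemma mul_eq_mul_of_shiftsHarmonicDegree (hn : 1 ≤ n) {P Q T : Module.End ℝ (STF n)} {δ : ℝ}
    {cP cQ : ℝ → ℕ → ℝ} (hT : ShiftsHarmonicDegree T δ) (hP : ActsOnIsotypicBy P cP)
    (hQ : ActsOnIsotypicBy Q cQ) (hc : ∀ s k, cP (s + δ) k = cQ s k) : P * T = T * Q := by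
  refine ext_of_pow_oGy_apply hn fun s k φ hφ => ?_
  obtain ⟨c, φ', hφ', hTφ⟩ := hT s k φ hφ
  rw [Module.End.mul_apply, Module.End.mul_apply, hTφ, map_smul, hP _ _ _ hφ', hQ _ _ _ hφ,
    map_smul, hTφ, smul_comm, hc]

end IsotypicPieces

section ModifiedOperators

variable {n : ℕ}

lemma exists_oGrad_eq_add_oGy {s : ℝ} {φ : STF n} (hφ : IsHarmonicOfDegree n s φ)
    (hb : 2 * s + n - 2 ≠ 0) :
    ∃ φ' ψ : STF n, IsHarmonicOfDegree n (s + 1) φ' ∧ IsHarmonicOfDegree n (s - 1) ψ ∧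
      oGrad n φ = φ' + oGy n ψ ∧ oDiv n φ = (2 * s + n - 2) • ψ := by
  set ψ := (2 * s + n - 2 : ℝ)⁻¹ • oDiv n φ
  have hdiv : oDiv n φ = (2 * s + n - 2) • ψ := by rw [smul_smul, mul_inv_cancel₀ hb, one_smul]
  have hψ : IsHarmonicOfDegree n (s - 1) ψ := by
    have hNdiv : oNy n (oDiv n φ) = (s - 1) • oDiv n φ := by
      rw [sub_smul, one_smul, eq_sub_iff_add_eq, ← oDiv_oNy, hφ.1, map_smul]
    constructor
    · rw [map_smul, hNdiv, smul_comm]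
    · rw [map_smul, oTry_oDiv, hφ.2, map_zero, smul_zero]
  refine ⟨oGrad n φ - oGy n ψ, ψ, ⟨?_, ?_⟩, hψ, (sub_add_cancel _ _).symm, hdiv⟩
  · rw [map_sub, oNy_oGrad, hφ.1, map_smul, oNy_oGy, hψ.1, map_smul]
    module
  · rw [map_sub, oTry_oGrad, hφ.2, map_zero, oTry_oGy, hψ.2, hψ.1, hdiv, map_zero]
    match_scalars
    ring

variable {E A : Module.End ℝ (STF n)}

lemma shiftsHarmonicDegree_oGrad_sub
    (hA : ActsOnIsotypicBy A (fun s k => 2 * s + 2 * k + n - 2)) (hEA : E * A = 1) :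
    ShiftsHarmonicDegree (oGrad n - oGy n * oDiv n * E) 1 := by
  intro s k φ hφ
  rcases eq_or_ne ((oGy n ^ k) φ) 0 with hv | hv
  · exact ⟨0, 0, isHarmonicOfDegree_zero _, by simp [hv]⟩
  have hα := hA.ne_zero hEA hφ hv
  have hb := hA.ne_zero hEA hφ (k := 0) (fun h => hv (by simp_all))
  obtain ⟨φ', ψ, hφ', -, hgrad, hdiv⟩ := exists_oGrad_eq_add_oGy hφ (by simpa using hb)
  refine ⟨1 - 2 * k / (2 * s + 2 * k + n - 2), φ', hφ', ?_⟩
  rw [LinearMap.sub_apply, Module.End.mul_apply, Module.End.mul_apply, hA.inv hEA s k φ hφ,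
    map_smul, map_smul, oGy_oDiv_pow_oGy, oGrad_pow_oGy, hgrad, hdiv, map_smul, map_add,
    ← pow_succ_apply]
  match_scalars
  · ring
  · linear_combination -(mul_inv_cancel₀ hα)

lemma shiftsHarmonicDegree_oDiv_sub
    (hA : ActsOnIsotypicBy A (fun s k => 2 * s + 2 * k + n - 2)) (hEA : E * A = 1) :
    ShiftsHarmonicDegree (oDiv n - E * oGrad n * oTry n) (-1) := by
  intro s k φ hφ
  rcases eq_or_ne ((oGy n ^ k) φ) 0 with hv | hv
  · exact ⟨0, 0, isHarmonicOfDegree_zero _, by simp [hv]⟩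
  have hb := hA.ne_zero hEA hφ (k := 0) (fun h => hv (by simp_all))
  obtain ⟨φ', ψ, hφ', hψ, hgrad, hdiv⟩ := exists_oGrad_eq_add_oGy hφ (by simpa using hb)
  rw [← sub_eq_add_neg]
  cases k with
  | zero => exact ⟨2 * s + n - 2, ψ, hψ, by simp [hφ.2, hdiv]⟩
  | succ k =>
    have hα : 2 * (s + 1) + 2 * k + n - 2 ≠ 0 := by
      have := hA.ne_zero hEA hφ hv
      push_cast at this
      contrapose! this
      linarith
    refine ⟨2 * s + n - 2 + 2 * (k + 1)
      - 2 * (k + 1) * (2 * s + 2 * k + n) * (2 * (s - 1) + 2 * ((k + 1 : ℕ) : ℝ) + n - 2)⁻¹,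
      ψ, hψ, ?_⟩
    rw [LinearMap.sub_apply, Module.End.mul_apply, Module.End.mul_apply, oTry_pow_succ_oGy hφ,
      map_smul, map_smul, oGrad_pow_oGy, hgrad, map_add, ← pow_succ_apply, map_add,
      hA.inv hEA _ _ _ hφ', hA.inv hEA _ _ _ hψ, oDiv_pow_succ_oGy, hgrad, hdiv, map_smul,
      map_add, ← pow_succ_apply]
    match_scalars
    · ring
    · linear_combination -(2 * (k + 1) : ℝ) * mul_inv_cancel₀ hα

end ModifiedOperators
/-- the modified operators `grad~ = grad − g∘div∘(𝒩+𝒞−1)⁻¹` and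
`div~ = div − (𝒩+𝒞−1)⁻¹∘grad∘tr` commute with the depth operator: `𝒩∘div~ = div~∘(𝒩−1)`,
`𝒩∘grad~ = grad~∘(𝒩+1)`, `𝒞∘div~ = div~∘(𝒞−1)`, `𝒞∘grad~ = grad~∘(𝒞+1)`. -/
theorem stmt14 (n : ℕ) (hn : 2 ≤ n)
    (C E : Module.End ℝ (STF n))
    (hC : ∀ (s k : ℕ) (φ : STF n), oNy n φ = (s : ℝ) • φ → oTry n φ = 0 →
      C ((oGy n ^ k) φ) = ((s : ℝ) + ((n : ℝ) - 2) / 2) • (oGy n ^ k) φ)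
    (hE : (oNy n + ((n : ℝ) / 2) • 1 + C - 1) * E = 1 ∧
          E * (oNy n + ((n : ℝ) / 2) • 1 + C - 1) = 1) :
    let NN : Module.End ℝ (STF n) := oNy n + ((n : ℝ) / 2) • 1
    let gradT : Module.End ℝ (STF n) := oGrad n - oGy n * oDiv n * E
    let divT : Module.End ℝ (STF n) := oDiv n - E * oGrad n * oTry n
    NN * divT = divT * (NN - 1) ∧
    NN * gradT = gradT * (NN + 1) ∧
    C * divT = divT * (C - 1) ∧
    C * gradT = gradT * (C + 1) := by
  intro NN gradT divT
  have hn1 : 1 ≤ n := by omega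
  have hC' : ActsOnIsotypicBy C (fun s _ => s + ((n : ℝ) - 2) / 2) := .of_natCast hC
  have hNN : ActsOnIsotypicBy NN (fun s k => s + 2 * k + n / 2) :=
    (actsOnIsotypicBy_oNy.add (ActsOnIsotypicBy.one.smul _)).congr fun _ _ => by ring
  have hA : ActsOnIsotypicBy (NN + C - 1) (fun s k => 2 * s + 2 * k + n - 2) :=
    ((hNN.add hC').sub .one).congr fun _ _ => by ring
  have hdivT := shiftsHarmonicDegree_oDiv_sub hA hE.2
  have hgradT := shiftsHarmonicDegree_oGrad_sub hA hE.2
  refine ⟨mul_eq_mul_of_shiftsHarmonicDegree hn1 hdivT hNN (hNN.sub .one) ?_,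
    mul_eq_mul_of_shiftsHarmonicDegree hn1 hgradT hNN (hNN.add .one) ?_,
    mul_eq_mul_of_shiftsHarmonicDegree hn1 hdivT hC' (hC'.sub .one) ?_,
    mul_eq_mul_of_shiftsHarmonicDegree hn1 hgradT hC' (hC'.add .one) ?_⟩ <;>
  intros <;> ring
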